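/- Let (X,f) be a dynamical system with X a compact metric space and f : X → X continuous. Assume f admits an invariant Borel probability measure with full support. If f has the average shadowing property, then f is topologically weakly mixing. -/

import Mathlib

/-! Since `f × f` inherits both the average shadowing property and a fully supported invariant
measure (`μ ⊗ μ`), it suffices to show that these two properties force transitivity. Given open
`U ∋ u` and `V ∋ v`, invariance of `μ` yields points `p`, `q` whose orbit segments of length `n`
spend a fraction at least `μ(B(u, β))`, resp. `μ(B(v, β))`, of their time in `B(u, β)`,
resp. `B(v, β)`. Concatenating these segments alternately gives a sequence whose only errors
occur at block boundaries, i.e. an average pseudo-orbit with error `O(1/n)`. A point shadowing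
it in average within `ε ≪ β μ(B)` must stay `β`-close to it at some of those visits, arbitrarily
late, so its orbit enters `U` and afterwards `V`. -/

open Filter Metric Set MeasureTheory Topology

section Defs

variable {X : Type*} [MetricSpace X]

/-- The Bowen ball of radius `ε` centered at `x` along a finite set of times `Λ`. -/
def bowenBallAlong (f : X → X) (Λ : Finset ℕ) (x : X) (ε : ℝ) : Set X :=
  {y | ∀ j ∈ Λ, dist (f^[j] x) (f^[j] y) < ε}

/-- `g` is a mistake function with threshold `ε₀`. -/
structure IsMistakeFun (g : ℕ → ℝ → ℕ) (ε₀ : ℝ) : Prop where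
  pos : 0 < ε₀
  mono : ∀ n : ℕ, ∀ ε : ℝ, 0 < ε → ε ≤ ε₀ → g n ε ≤ g (n + 1) ε
  small : ∀ ε : ℝ, 0 < ε → ε ≤ ε₀ →
    Tendsto (fun n : ℕ => (g n ε : ℝ) / n) atTop (nhds 0)
  ext : ∀ n : ℕ, ∀ ε : ℝ, ε₀ < ε → g n ε = g n ε₀

/-- The `(g;n,ε)`-Bowen ball `B_n(g;x,ε)`: union of Bowen balls along all
`Λ ⊆ {0,…,n-1}` with `#Λ ≥ n - g(n,ε)`. -/
def mistakeBowenBall (f : X → X) (g : ℕ → ℝ → ℕ) (n : ℕ) (x : X) (ε : ℝ) : Set X :=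
  ⋃ Λ ∈ {Λ : Finset ℕ | Λ ⊆ Finset.range n ∧ n - g n ε ≤ Λ.card},
    bowenBallAlong f Λ x ε

/-- Almost specification property with given mistake function `g` and gap function `kg`. -/
def AlmostSpecWith (f : X → X) (g : ℕ → ℝ → ℕ) (kg : ℝ → ℕ) : Prop :=
  ∀ m : ℕ, 1 ≤ m → ∀ (ε : ℕ → ℝ) (x : ℕ → X) (nseq : ℕ → ℕ),
    (∀ j, 1 ≤ j → j ≤ m → 0 < ε j) →
    (∀ j, 1 ≤ j → j ≤ m → kg (ε j) ≤ nseq j) →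
    ∃ z : X, ∀ j, 1 ≤ j → j ≤ m →
      f^[∑ s ∈ Finset.Ico 1 j, nseq s] z ∈ mistakeBowenBall f g (nseq j) (x j) (ε j)

/-- The almost specification property. -/
def AlmostSpec (f : X → X) : Prop :=
  ∃ (g : ℕ → ℝ → ℕ) (ε₀ : ℝ) (kg : ℝ → ℕ),
    IsMistakeFun g ε₀ ∧ AlmostSpecWith f g kg

/-- `{x_n}` is a `δ`-average-pseudo-orbit of `f`. -/
def AvgPseudoOrbit (f : X → X) (δ : ℝ) (x : ℕ → X) : Prop :=
  ∃ N : ℕ, 0 < N ∧ ∀ n : ℕ, N ≤ n → ∀ k : ℕ,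
    (∑ i ∈ Finset.range n, dist (f (x (i + k))) (x (i + k + 1))) / n < δ

/-- `{x_n}` is `ε`-shadowed in average by `y`. -/
def ShadowedInAvg (f : X → X) (ε : ℝ) (x : ℕ → X) (y : X) : Prop :=
  limsup (fun n : ℕ => (∑ i ∈ Finset.range n, dist (f^[i] y) (x i)) / n) atTop < ε

/-- The average shadowing property. -/
def AvgShadowing (f : X → X) : Prop :=
  ∀ ε : ℝ, 0 < ε → ∃ δ : ℝ, 0 < δ ∧
    ∀ x : ℕ → X, AvgPseudoOrbit f δ x → ∃ y : X, ShadowedInAvg f ε x y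

/-- `{x_n}` is an asymptotic average pseudo-orbit of `f`. -/
def AsympAvgPseudoOrbit (f : X → X) (x : ℕ → X) : Prop :=
  Tendsto (fun n : ℕ => (∑ i ∈ Finset.range n, dist (f (x i)) (x (i + 1))) / n)
    atTop (nhds 0)

/-- `{x_n}` is asymptotically shadowed in average by `y`. -/
def AsympShadowedInAvg (f : X → X) (x : ℕ → X) (y : X) : Prop :=
  Tendsto (fun n : ℕ => (∑ i ∈ Finset.range n, dist (f^[i] y) (x i)) / n)
    atTop (nhds 0)

/-- The asymptotic average shadowing property. -/
def AsympAvgShadowing (f : X → X) : Prop :=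
  ∀ x : ℕ → X, AsympAvgPseudoOrbit f x → ∃ y : X, AsympShadowedInAvg f x y

/-- An infinite `δ`-pseudo-orbit. -/
def PseudoOrbit (f : X → X) (δ : ℝ) (x : ℕ → X) : Prop :=
  ∀ i : ℕ, dist (f (x i)) (x (i + 1)) < δ

/-- There exists a finite `δ`-pseudo-orbit of length `n` from `x` to `y`. -/
def FinChain (f : X → X) (δ : ℝ) (n : ℕ) (x y : X) : Prop :=
  ∃ c : ℕ → X, c 0 = x ∧ c n = y ∧ ∀ i < n, dist (f (c i)) (c (i + 1)) < δ

/-- Chain transitivity. -/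
def ChainTransitive (f : X → X) : Prop :=
  ∀ δ : ℝ, 0 < δ → ∀ x y : X, ∃ n : ℕ, 0 < n ∧ FinChain f δ n x y

/-- Chain mixing. -/
def ChainMixing (f : X → X) : Prop :=
  ∀ δ : ℝ, 0 < δ → ∀ x y : X, ∃ N : ℕ, 0 < N ∧ ∀ n : ℕ, N ≤ n → FinChain f δ n x y

/-- The shadowing property. -/
def Shadowing (f : X → X) : Prop :=
  ∀ ε : ℝ, 0 < ε → ∃ δ : ℝ, 0 < δ ∧
    ∀ x : ℕ → X, PseudoOrbit f δ x → ∃ z : X, ∀ i : ℕ, dist (f^[i] z) (x i) < ε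

/-- The limit shadowing property. -/
def LimitShadowing (f : X → X) : Prop :=
  ∀ x : ℕ → X, Tendsto (fun i : ℕ => dist (f (x i)) (x (i + 1))) atTop (nhds 0) →
    ∃ z : X, Tendsto (fun i : ℕ => dist (f^[i] z) (x i)) atTop (nhds 0)

/-- Topological transitivity. -/
def TopTransitive {Y : Type*} [TopologicalSpace Y] (f : Y → Y) : Prop :=
  ∀ U V : Set Y, IsOpen U → IsOpen V → U.Nonempty → V.Nonempty →
    ∃ n : ℕ, 0 < n ∧ (f^[n] '' U ∩ V).Nonempty

/-- Total transitivity. -/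
def TotallyTransitive {Y : Type*} [TopologicalSpace Y] (f : Y → Y) : Prop :=
  ∀ n : ℕ, 1 ≤ n → TopTransitive f^[n]

/-- Topological weak mixing: `f × f` is transitive. -/
def WeaklyMixing {Y : Type*} [TopologicalSpace Y] (f : Y → Y) : Prop :=
  TopTransitive (Prod.map f f)

/-- Topological mixing. -/
def TopMixing {Y : Type*} [TopologicalSpace Y] (f : Y → Y) : Prop :=
  ∀ U V : Set Y, IsOpen U → IsOpen V → U.Nonempty → V.Nonempty →
    ∃ N : ℕ, 0 < N ∧ ∀ n : ℕ, N ≤ n → (f^[n] '' U ∩ V).Nonempty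

/-- The forward orbit of a point. -/
def fOrbit (f : X → X) (x : X) : Set X := Set.range fun n : ℕ => f^[n] x

/-- `x` is a minimal point of `f`: every point of the orbit closure of `x`
has orbit dense in that orbit closure. -/
def MinimalPoint (f : X → X) (x : X) : Prop :=
  ∀ y ∈ closure (fOrbit f x), closure (fOrbit f x) ⊆ closure (fOrbit f y)

variable [MeasurableSpace X]

/-- `μ` is an `f`-invariant Borel probability measure. -/
def InvariantProb (f : X → X) (μ : Measure X) : Prop :=
  IsProbabilityMeasure μ ∧ ∀ B : Set X, MeasurableSet B → μ (f ⁻¹' B) = μ B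

/-- A set is universally null if it has measure zero for every invariant
probability measure. -/
def UnivNull (f : X → X) (U : Set X) : Prop :=
  ∀ μ : Measure X, InvariantProb f μ → μ U = 0

/-- The measure center: complement of the union of all universally null open sets. -/
def measureCenter (f : X → X) : Set X :=
  (⋃ U ∈ {U : Set X | IsOpen U ∧ UnivNull f U}, U)ᶜ

/-- `μ` has full support. -/
def FullSupport (μ : Measure X) : Prop :=
  ∀ U : Set X, IsOpen U → U.Nonempty → 0 < μ U

end Defs

section Visits

variable {X : Type*} [MetricSpace X]

/-- The set of visiting times `N(x,U)`. -/
def visitTimes (f : X → X) (x : X) (U : Set X) : Set ℕ :=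
  {n : ℕ | 0 < n ∧ f^[n] x ∈ U}

/-- `η(n,U) = max_{x ∈ X} #(N(x,U) ∩ {0,…,n-1})`. -/
noncomputable def eta (f : X → X) (U : Set X) (n : ℕ) : ℕ :=
  sSup {k : ℕ | ∃ x : X, k = (visitTimes f x U ∩ Set.Iio n).ncard}

/-- The visit frequency `ξ(U) = inf_{n>0} η(n,U)/n`. -/
noncomputable def xi (f : X → X) (U : Set X) : ℝ :=
  ⨅ n : ℕ, (eta f U (n + 1) : ℝ) / (n + 1)

/-- `J ⊆ ℕ` has asymptotic density `a`. -/
def HasDensity (J : Set ℕ) (a : ℝ) : Prop :=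
  Tendsto (fun n : ℕ => ((J ∩ Set.Iio n).ncard : ℝ) / n) atTop (nhds a)

/-- Upper asymptotic density of a set of naturals. -/
noncomputable def upperDensity (J : Set ℕ) : ℝ :=
  limsup (fun n : ℕ => ((J ∩ Set.Iio n).ncard : ℝ) / n) atTop

end Visits

section BlockSequence

open scoped Finset

variable {X : Type*}

def blockSeq (f : X → X) (n : ℕ) (z : ℕ → X) (i : ℕ) : X :=
  f^[i % n] (z (i / n))

lemma blockSeq_mul_add (f : X → X) (z : ℕ → X) {n t : ℕ} (ht : t < n) (j : ℕ) :
    blockSeq f n z (j * n + t) = f^[t] (z j) := by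
  have hn : 0 < n := by omega
  rw [blockSeq, mul_comm, Nat.mul_add_mod, Nat.mod_eq_of_lt ht, Nat.mul_add_div hn,
    Nat.div_eq_of_lt ht, add_zero]

lemma blockSeq_add_one_of_not_dvd (f : X → X) (z : ℕ → X) {n i : ℕ} (hi : ¬ n ∣ i + 1) :
    blockSeq f n z (i + 1) = f (blockSeq f n z i) := by
  have hdiv : (i + 1) / n = i / n := Nat.succ_div_of_not_dvd hi
  have hmod : (i + 1) % n = i % n + 1 := by
    have h₁ := Nat.div_add_mod (i + 1) n
    have h₂ := Nat.div_add_mod i n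
    rw [hdiv] at h₁
    omega
  rw [blockSeq, blockSeq, hdiv, hmod, Function.iterate_succ_apply']

lemma sum_range_mul_blockSeq {M : Type*} [AddCommMonoid M] (f : X → X) (g : X → M)
    (n : ℕ) (z : ℕ → X) (K : ℕ) :
    ∑ i ∈ Finset.range (K * n), g (blockSeq f n z i) =
      ∑ j ∈ Finset.range K, birkhoffSum f g n (z j) := by
  induction K with
  | zero => simp
  | succ K ih =>
    rw [Nat.succ_mul, Finset.sum_range_add, ih, Finset.sum_range_succ, birkhoffSum]
    congr 1
    exact Finset.sum_congr rfl fun t ht => by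
      rw [blockSeq_mul_add f z (Finset.mem_range.1 ht)]

lemma card_filter_dvd_add_le (n m k : ℕ) :
    #{i ∈ Finset.range m | n ∣ i + k + 1} ≤ m / n + 1 := by
  have h := Nat.card_multiples (k + m) n
  rw [Finset.card_filter, Finset.sum_range_add, ← Finset.card_filter, ← Finset.card_filter,
    Nat.card_multiples] at h
  have := Nat.add_div_le_div_add_div_add_one k m n
  have hswap : #{i ∈ Finset.range m | n ∣ k + i + 1} = #{i ∈ Finset.range m | n ∣ i + k + 1} :=
    congrArg Finset.card (Finset.filter_congr fun i _ => by rw [add_comm k i])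
  omega

end BlockSequence

section AveragePseudoOrbits

open scoped Finset

variable {X Y : Type*} [MetricSpace X] [MetricSpace Y]

lemma dist_le_diam_univ [BoundedSpace X] (a b : X) : dist a b ≤ diam (univ : Set X) :=
  dist_le_diam_of_mem (Bornology.isBounded_univ.2 ‹_›) (mem_univ a) (mem_univ b)

lemma AvgPseudoOrbit.mono {f : X → X} {δ δ' : ℝ} {x : ℕ → X} (hx : AvgPseudoOrbit f δ x)
    (hδ : δ ≤ δ') : AvgPseudoOrbit f δ' x := by
  obtain ⟨N, hN, hx⟩ := hx
  exact ⟨N, hN, fun n hn k => (hx n hn k).trans_le hδ⟩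

lemma AvgPseudoOrbit.map {f : X → X} {g : Y → Y} {φ : X → Y} {δ : ℝ} {x : ℕ → X}
    (hx : AvgPseudoOrbit f δ x) (hφ : LipschitzWith 1 φ) (hfg : Function.Semiconj φ f g) :
    AvgPseudoOrbit g δ (φ ∘ x) := by
  obtain ⟨N, hN, hx⟩ := hx
  refine ⟨N, hN, fun n hn k => lt_of_le_of_lt ?_ (hx n hn k)⟩
  gcongr with i
  simpa [hfg (x (i + k))] using hφ.dist_le_mul (f (x (i + k))) (x (i + k + 1))

lemma blockSeq_avgPseudoOrbit [BoundedSpace X] (f : X → X) (z : ℕ → X) {n : ℕ} {δ : ℝ}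
    (hn : 2 * diam (univ : Set X) < δ * n) : AvgPseudoOrbit f δ (blockSeq f n z) := by
  set D := diam (univ : Set X)
  have hD : 0 ≤ D := diam_nonneg
  have hn₀ : 0 < n := Nat.pos_of_ne_zero fun h => by simp [h] at hn; linarith
  refine ⟨n, hn₀, fun m hm k => ?_⟩
  have hm₀ : (0 : ℝ) < m := by exact_mod_cast hn₀.trans_le hm
  -- only the jumps from the end of one block to the start of the next cost anything
  have hsum : ∑ i ∈ Finset.range m, dist (f (blockSeq f n z (i + k))) (blockSeq f n z (i + k + 1))
      ≤ (m / n + 1 : ℕ) * D := calc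
    _ ≤ ∑ i ∈ Finset.range m, if n ∣ i + k + 1 then D else 0 := by
      gcongr with i
      split_ifs with hi
      · exact dist_le_diam_univ _ _
      · rw [blockSeq_add_one_of_not_dvd f z hi, dist_self]
    _ = #{i ∈ Finset.range m | n ∣ i + k + 1} * D := by
      rw [Finset.sum_ite, Finset.sum_const_zero, add_zero, Finset.sum_const, nsmul_eq_mul]
    _ ≤ (m / n + 1 : ℕ) * D := by
      gcongr
      exact card_filter_dvd_add_le n m k
  have hdiv : ((m / n : ℕ) : ℝ) + 1 ≤ 2 * m / n := by
    have h₁ : ((m / n : ℕ) : ℝ) ≤ m / n := Nat.cast_div_le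
    have h₂ : (1 : ℝ) ≤ m / n := by
      rw [one_le_div (by exact_mod_cast hn₀)]
      exact_mod_cast hm
    linarith [show (2 : ℝ) * m / n = m / n + m / n by ring]
  rw [div_lt_iff₀ hm₀]
  calc _ ≤ (m / n + 1 : ℕ) * D := hsum
    _ ≤ 2 * m / n * D := by push_cast; gcongr
    _ = 2 * D / n * m := by ring
    _ < δ * m := by
      gcongr
      rwa [div_lt_iff₀ (by exact_mod_cast hn₀)]

lemma isBoundedUnder_le_avg_dist [BoundedSpace X] (a b : ℕ → X) :
    IsBoundedUnder (· ≤ ·) atTop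
      (fun m : ℕ => (∑ i ∈ Finset.range m, dist (a i) (b i)) / m) := by
  refine isBoundedUnder_of ⟨diam (univ : Set X), fun m => ?_⟩
  rcases Nat.eq_zero_or_pos m with rfl | hm
  · simpa using diam_nonneg
  rw [div_le_iff₀ (by exact_mod_cast hm)]
  calc ∑ i ∈ Finset.range m, dist (a i) (b i)
      ≤ ∑ _i ∈ Finset.range m, diam (univ : Set X) := by
        gcongr
        exact dist_le_diam_univ _ _
    _ = diam (univ : Set X) * m := by simp [mul_comm]

lemma isBoundedUnder_ge_avg_dist (a b : ℕ → X) :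
    IsBoundedUnder (· ≥ ·) atTop
      (fun m : ℕ => (∑ i ∈ Finset.range m, dist (a i) (b i)) / m) :=
  isBoundedUnder_of ⟨0, fun m => by positivity⟩

lemma isCoboundedUnder_le_avg_dist (a b : ℕ → X) :
    IsCoboundedUnder (· ≤ ·) atTop
      (fun m : ℕ => (∑ i ∈ Finset.range m, dist (a i) (b i)) / m) :=
  (isBoundedUnder_ge_avg_dist a b).isCoboundedUnder_flip

lemma AvgShadowing.prodMap [BoundedSpace X] [BoundedSpace Y] {f : X → X} {g : Y → Y}
    (hf : AvgShadowing f) (hg : AvgShadowing g) : AvgShadowing (Prod.map f g) := by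
  intro ε hε
  obtain ⟨δ₁, hδ₁, hf⟩ := hf (ε / 2) (by positivity)
  obtain ⟨δ₂, hδ₂, hg⟩ := hg (ε / 2) (by positivity)
  refine ⟨min δ₁ δ₂, lt_min hδ₁ hδ₂, fun z hz => ?_⟩
  obtain ⟨y₁, hy₁⟩ := hf _ ((hz.map LipschitzWith.prod_fst fun _ => rfl).mono (min_le_left _ _))
  obtain ⟨y₂, hy₂⟩ := hg _ ((hz.map LipschitzWith.prod_snd fun _ => rfl).mono (min_le_right _ _))
  refine ⟨(y₁, y₂), ?_⟩
  have hle : ∀ m : ℕ,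
      (∑ i ∈ Finset.range m, dist ((Prod.map f g)^[i] (y₁, y₂)) (z i)) / m ≤
        (∑ i ∈ Finset.range m, dist (f^[i] y₁) (z i).1) / m +
          (∑ i ∈ Finset.range m, dist (g^[i] y₂) (z i).2) / m := fun m => by
    rw [← add_div, ← Finset.sum_add_distrib]
    gcongr with i
    rw [Prod.map_iterate, Prod.map_apply, Prod.dist_eq]
    exact max_le_add_of_nonneg dist_nonneg dist_nonneg
  calc _ ≤ limsup (fun m : ℕ => (∑ i ∈ Finset.range m, dist (f^[i] y₁) (z i).1) / m +
          (∑ i ∈ Finset.range m, dist (g^[i] y₂) (z i).2) / m) atTop :=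
        limsup_le_limsup (.of_forall hle) (isCoboundedUnder_le_avg_dist _ _)
          (isBoundedUnder_le_add (isBoundedUnder_le_avg_dist _ _) (isBoundedUnder_le_avg_dist _ _))
    _ ≤ _ + _ := limsup_add_le (isBoundedUnder_ge_avg_dist _ _) (isBoundedUnder_le_avg_dist _ _)
          (isCoboundedUnder_le_avg_dist _ _) (isBoundedUnder_le_avg_dist _ _)
    _ < ε / 2 + ε / 2 := add_lt_add hy₁ hy₂
    _ = ε := add_halves ε

end AveragePseudoOrbits

section Frequencies

variable {X : Type*}

lemma exists_ge_mem_lt_of_sum_lt {x : ℕ → X} {W : Set X} {a : ℕ → ℝ} (ha : ∀ i, 0 ≤ a i)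
    {β : ℝ} (hβ : 0 ≤ β) {m₀ m : ℕ} (hm : m₀ ≤ m)
    (h : ∑ i ∈ Finset.range m, a i < β * (∑ i ∈ Finset.range m, W.indicator 1 (x i) - m₀)) :
    ∃ s, m₀ ≤ s ∧ x s ∈ W ∧ a s < β := by
  by_contra! hbad
  have hle : β * ∑ i ∈ Finset.range m, W.indicator 1 (x i) ≤ β * m₀ + ∑ i ∈ Finset.range m, a i :=
    calc β * ∑ i ∈ Finset.range m, W.indicator 1 (x i)
        = ∑ i ∈ Finset.range m₀, β * W.indicator 1 (x i) +
            ∑ i ∈ Finset.Ico m₀ m, β * W.indicator 1 (x i) := by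
          rw [Finset.mul_sum, Finset.sum_range_add_sum_Ico _ hm]
      _ ≤ ∑ _i ∈ Finset.range m₀, β + ∑ i ∈ Finset.Ico m₀ m, a i := by
          gcongr with i hi i hi
          · by_cases hxi : x i ∈ W <;> simp [hxi, hβ]
          · by_cases hxi : x i ∈ W
            · simpa [hxi] using hbad i (Finset.mem_Ico.1 hi).1 hxi
            · simpa [hxi] using ha i
      _ ≤ β * m₀ + ∑ i ∈ Finset.range m, a i := by
          rw [Finset.sum_const, Finset.card_range, nsmul_eq_mul, mul_comm]
          gcongr
          · exact fun i _ _ => ha i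
          · exact fun i hi => Finset.mem_range.2 (Finset.mem_Ico.1 hi).2
  linarith

lemma ShadowedInAvg.frequently_mem_dist_lt [MetricSpace X] [BoundedSpace X] {f : X → X}
    {ε β c : ℝ} {x : ℕ → X} {y : X} (hy : ShadowedInAvg f ε x y) (hβ : 0 < β)
    (hεc : ε < β * c) {W : Set X}
    (hW : ∃ᶠ m : ℕ in atTop, c * m ≤ ∑ i ∈ Finset.range m, W.indicator 1 (x i)) :
    ∃ᶠ s in atTop, x s ∈ W ∧ dist (f^[s] y) (x s) < β := by
  refine frequently_atTop.2 fun m₀ => ?_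
  have hsmall := eventually_lt_of_limsup_lt hy (isBoundedUnder_le_avg_dist _ _)
  have hlarge : ∀ᶠ m : ℕ in atTop, β * m₀ / (β * c - ε) ≤ m :=
    tendsto_natCast_atTop_atTop.eventually_ge_atTop _
  obtain ⟨m, hcm, hsm, hlm, hm⟩ :=
    (hW.and_eventually (hsmall.and (hlarge.and (eventually_ge_atTop (m₀ + 1))))).exists
  have hm₀ : (0 : ℝ) < m := by exact_mod_cast (by omega : 0 < m)
  rw [div_lt_iff₀ hm₀] at hsm
  rw [div_le_iff₀ (sub_pos.2 hεc)] at hlm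
  refine exists_ge_mem_lt_of_sum_lt (m := m) (fun _ => dist_nonneg) hβ.le (by omega) ?_
  nlinarith [mul_le_mul_of_nonneg_left hcm hβ.le]

lemma sum_range_two_mul_ite_even {M : Type*} [AddCommMonoid M] (g : X → M) (p q : X) (k : ℕ) :
    ∑ j ∈ Finset.range (2 * k), g (if Even j then p else q) = k • (g p + g q) := by
  induction k with
  | zero => simp
  | succ k ih =>
    have hodd : ¬ Even (2 * k + 1) := Nat.not_even_iff_odd.2 (odd_two_mul_add_one k)
    rw [show 2 * (k + 1) = 2 * k + 1 + 1 by ring, Finset.sum_range_succ, Finset.sum_range_succ,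
      ih, if_pos (even_two_mul k), if_neg hodd, succ_nsmul, add_assoc]

lemma frequently_le_sum_blockSeq_alternating (f : X → X) (g : X → ℝ) {n : ℕ} (hn : 0 < n)
    (p q : X) {a : ℝ} (ha : n * a ≤ birkhoffSum f g n p + birkhoffSum f g n q) :
    ∃ᶠ m : ℕ in atTop,
      a / 2 * m ≤ ∑ i ∈ Finset.range m, g (blockSeq f n (fun j => if Even j then p else q) i) := by
  refine frequently_atTop.2 fun k => ⟨2 * k * n, by nlinarith, ?_⟩
  rw [sum_range_mul_blockSeq, sum_range_two_mul_ite_even (birkhoffSum f g n), nsmul_eq_mul]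
  push_cast
  nlinarith [mul_le_mul_of_nonneg_left ha (Nat.cast_nonneg (α := ℝ) k)]

lemma ShadowedInAvg.frequently_mem_ball_of_blockSeq [MetricSpace X] [BoundedSpace X]
    {f : X → X} {n : ℕ} (hn : 0 < n) {p q y w : X} {β c : ℝ} (hβ : 0 < β) (hc : 0 < c)
    (hy : ShadowedInAvg f (β * c / 4) (blockSeq f n (fun j => if Even j then p else q)) y)
    (hw : n * c ≤ birkhoffSum f ((ball w β).indicator 1) n p +
      birkhoffSum f ((ball w β).indicator 1) n q) :
    ∃ᶠ s in atTop, f^[s] y ∈ ball w (2 * β) := by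
  refine (hy.frequently_mem_dist_lt hβ (by nlinarith) (c := c / 2)
    (frequently_le_sum_blockSeq_alternating f _ hn p q hw)).mono fun s ⟨hxs, hys⟩ => ?_
  rw [mem_ball] at hxs ⊢
  linarith [dist_triangle (f^[s] y) (blockSeq f n (fun j => if Even j then p else q) s) w]

end Frequencies

namespace MeasureTheory.MeasurePreserving

variable {X : Type*} [MeasurableSpace X] {f : X → X} {μ : Measure X}

lemma integrable_birkhoffSum {E : Type*} [NormedAddCommGroup E]
    (hf : MeasurePreserving f μ μ) {g : X → E} (hg : Integrable g μ) (n : ℕ) :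
    Integrable (birkhoffSum f g n) μ := by
  unfold birkhoffSum
  exact integrable_finsetSum _ fun k _ => (hf.iterate k).integrable_comp_of_integrable hg

lemma integral_birkhoffSum {E : Type*} [NormedAddCommGroup E]
    [NormedSpace ℝ E] (hf : MeasurePreserving f μ μ) {g : X → E} (hg : Integrable g μ) (n : ℕ) :
    ∫ x, birkhoffSum f g n x ∂μ = n • ∫ x, g x ∂μ := by
  have hcomp : ∀ k, ∫ x, g (f^[k] x) ∂μ = ∫ x, g x ∂μ := fun k => by
    have hmap := (hf.iterate k).map_eq
    rw [← integral_map (hf.iterate k).aemeasurable (hmap.symm ▸ hg.aestronglyMeasurable), hmap]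
  unfold birkhoffSum
  rw [integral_finsetSum (f := fun k x => g (f^[k] x)) _ fun k _ =>
    (hf.iterate k).integrable_comp_of_integrable hg]
  simp [hcomp]

lemma exists_le_birkhoffSum [IsProbabilityMeasure μ]
    (hf : MeasurePreserving f μ μ) {g : X → ℝ} (hg : Integrable g μ) (n : ℕ) :
    ∃ x, n * ∫ x, g x ∂μ ≤ birkhoffSum f g n x := by
  obtain ⟨x, hx⟩ := exists_integral_le (hf.integrable_birkhoffSum hg n)
  exact ⟨x, by rwa [hf.integral_birkhoffSum hg, nsmul_eq_mul] at hx⟩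

lemma exists_le_birkhoffSum_indicator [IsProbabilityMeasure μ]
    (hf : MeasurePreserving f μ μ) {W : Set X} (hW : MeasurableSet W) (n : ℕ) :
    ∃ x, n * μ.real W ≤ birkhoffSum f (W.indicator 1) n x := by
  have hint : Integrable (W.indicator (1 : X → ℝ)) μ := (integrable_const 1).indicator hW
  simpa [integral_indicator_one hW] using hf.exists_le_birkhoffSum hint n

lemma topTransitive_of_avgShadowing [MetricSpace X] [BoundedSpace X] [OpensMeasurableSpace X]
    [IsProbabilityMeasure μ] [μ.IsOpenPosMeasure] (hf : MeasurePreserving f μ μ)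
    (h : AvgShadowing f) : TopTransitive f := by
  intro U V hU hV ⟨u, hu⟩ ⟨v, hv⟩
  obtain ⟨β, hβ, huU, hvV⟩ : ∃ β > 0, ball u (2 * β) ⊆ U ∧ ball v (2 * β) ⊆ V := by
    obtain ⟨r, hr, hrU⟩ := isOpen_iff.1 hU u hu
    obtain ⟨r', hr', hr'V⟩ := isOpen_iff.1 hV v hv
    refine ⟨min r r' / 2, by positivity, (ball_subset_ball ?_).trans hrU,
      (ball_subset_ball ?_).trans hr'V⟩ <;> linarith [min_le_left r r', min_le_right r r']
  set c := min (μ.real (ball u β)) (μ.real (ball v β))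
  have hc : 0 < c := lt_min (ENNReal.toReal_pos (measure_ball_pos μ u hβ).ne' (measure_ne_top _ _))
    (ENNReal.toReal_pos (measure_ball_pos μ v hβ).ne' (measure_ne_top _ _))
  have hcu : c ≤ μ.real (ball u β) := min_le_left _ _
  have hcv : c ≤ μ.real (ball v β) := min_le_right _ _
  obtain ⟨δ, hδ, hshadow⟩ := h (β * c / 4) (by positivity)
  obtain ⟨n, hn⟩ := exists_nat_gt (2 * diam (univ : Set X) / δ)
  rw [div_lt_iff₀ hδ, mul_comm (n : ℝ)] at hn
  have hn₀ : 0 < n := Nat.pos_of_ne_zero fun h => by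
    simp [h] at hn
    linarith [diam_nonneg (s := (univ : Set X))]
  obtain ⟨p, hp⟩ := hf.exists_le_birkhoffSum_indicator (measurableSet_ball (x := u)) n
  obtain ⟨q, hq⟩ := hf.exists_le_birkhoffSum_indicator (measurableSet_ball (x := v)) n
  obtain ⟨y, hy⟩ := hshadow _ (blockSeq_avgPseudoOrbit f (fun j => if Even j then p else q) hn)
  have hnonneg : ∀ w z, 0 ≤ birkhoffSum f ((ball w β).indicator (1 : X → ℝ)) n z :=
    fun w z => Finset.sum_nonneg fun _ _ => indicator_nonneg (fun _ _ => zero_le_one) _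
  obtain ⟨s, -, hs⟩ := frequently_atTop.1
    (hy.frequently_mem_ball_of_blockSeq hn₀ hβ hc (w := u) (by nlinarith [hnonneg u q])) 0
  obtain ⟨t, hts, ht⟩ := frequently_atTop.1
    (hy.frequently_mem_ball_of_blockSeq hn₀ hβ hc (w := v) (by nlinarith [hnonneg v p])) (s + 1)
  refine ⟨t - s, by omega, f^[t] y, ⟨f^[s] y, huU hs, ?_⟩, hvV ht⟩
  rw [← Function.iterate_add_apply, Nat.sub_add_cancel (by omega)]

end MeasureTheory.MeasurePreserving

lemma InvariantProb.measurePreserving {X : Type*} [MetricSpace X] [MeasurableSpace X]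
    {f : X → X} {μ : Measure X} (hμ : InvariantProb f μ) (hf : Measurable f) :
    MeasurePreserving f μ μ :=
  ⟨hf, Measure.ext fun B hB => by rw [Measure.map_apply hf hB, hμ.2 B hB]⟩

lemma FullSupport.isOpenPosMeasure {X : Type*} [MetricSpace X] [MeasurableSpace X]
    {μ : Measure X} (hμ : FullSupport μ) : μ.IsOpenPosMeasure :=
  ⟨fun U hU hne => (hμ U hU hne).ne'⟩

/-- A compact system with the average shadowing property and a
fully supported invariant measure is topologically weakly mixing. -/
theorem avgShadowing_fullMeasure_weaklyMixing
    {X : Type*} [MetricSpace X] [CompactSpace X] [MeasurableSpace X] [BorelSpace X]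
    (f : X → X) (hf : Continuous f)
    (μ : Measure X) (hμ : InvariantProb f μ) (hfull : FullSupport μ)
    (h : AvgShadowing f) : WeaklyMixing f := by
  have : IsProbabilityMeasure μ := hμ.1
  have : μ.IsOpenPosMeasure := hfull.isOpenPosMeasure
  have hpres := hμ.measurePreserving hf.measurable
  exact (hpres.prod hpres).topTransitive_of_avgShadowing (h.prodMap h)
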